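/- The following commutator identities hold: (a) [𝔬^{c₁}_{β₁}, 𝔬^{c₂}_{β₂}] = 0 for all colors c₁, c₂ and cocolors β₁, β₂ (the span of the 𝔬-matrices is an abelian Lie subalgebra of gl_N(ℝ)); (b) [𝔟^{β₁}_{β₂}, 𝔬^{c}_{β₃}] = −δ_{β₁,β₃} 𝔬^{c}_{β₂} for all cocolors β₁, β₂, β₃ and every color c; (c) [𝔠^{c₁}_{c₂}, 𝔬^{c₃}_{β}] = δ_{c₂,c₃} 𝔬^{c₁}_{β} for all colors c₁, c₂, c₃ and every cocolor β. -/

import Mathlib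

open Matrix BigOperators

/-- Index type for the standard basis of `ℝ^N`, `N = n 0 + ⋯ + n (C-1)`:
pairs `(c, i)` with `c` a color and `0 ≤ i ≤ n c - 1`. -/
abbrev Idx {C : ℕ} (n : Fin C → ℕ) := Σ c : Fin C, Fin (n c)

/-- A cocolor is a pair `(k, j)` with `1 ≤ j ≤ n k - 1`. -/
abbrev Cocolor {C : ℕ} (n : Fin C → ℕ) := {p : Idx n // (p.2 : ℕ) ≠ 0}

/-- `ν(σ) = Σ_j e_{(k, σ j)} (e^{(l, j)})ᵀ`. -/
noncomputable def nu {C : ℕ} (n : Fin C → ℕ) (k l : Fin C) (σ : Fin (n l) → Fin (n k)) :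
    Matrix (Idx n) (Idx n) ℝ :=
  ∑ j : Fin (n l), Matrix.single (⟨k, σ j⟩ : Idx n) (⟨l, j⟩ : Idx n) 1

/-- The network algebra `net_{C,N}`: the `ℝ`-span of all the `ν(σ)`. -/
noncomputable def net {C : ℕ} (n : Fin C → ℕ) : Submodule ℝ (Matrix (Idx n) (Idx n) ℝ) :=
  Submodule.span ℝ {M | ∃ (k l : Fin C) (σ : Fin (n l) → Fin (n k)), M = nu n k l σ}

/-- Vectors `x^k_0 = e_{(k,0)}` and `x^k_j = e_{(k,j)} - e_{(k,0)}` for `j ≠ 0`. -/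
noncomputable def xv {C : ℕ} (n : Fin C → ℕ) (hn : ∀ c, 0 < n c) (k : Fin C)
    (j : Fin (n k)) : Idx n → ℝ :=
  if (j : ℕ) = 0 then Pi.single (⟨k, j⟩ : Idx n) 1
  else Pi.single (⟨k, j⟩ : Idx n) 1 - Pi.single (⟨k, ⟨0, hn k⟩⟩ : Idx n) 1

/-- Covectors `X^k_0 = Σ_q e^{(k,q)}` and `X^k_i = e^{(k,i)}` for `i ≠ 0`. -/
noncomputable def Xv {C : ℕ} (n : Fin C → ℕ) (k : Fin C) (i : Fin (n k)) : Idx n → ℝ :=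
  if (i : ℕ) = 0 then ∑ q : Fin (n k), Pi.single (⟨k, q⟩ : Idx n) 1
  else Pi.single (⟨k, i⟩ : Idx n) 1

/-- `𝔠^k_l = x^k_0 (X^l_0)ᵀ`. -/
noncomputable def cM {C : ℕ} (n : Fin C → ℕ) (hn : ∀ c, 0 < n c) (k l : Fin C) :
    Matrix (Idx n) (Idx n) ℝ :=
  vecMulVec (xv n hn k ⟨0, hn k⟩) (Xv n l ⟨0, hn l⟩)

/-- `𝔞^β_l = x^β (X^l_0)ᵀ` for a cocolor `β` and color `l`. -/
noncomputable def aM {C : ℕ} (n : Fin C → ℕ) (hn : ∀ c, 0 < n c) (β : Cocolor n)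
    (l : Fin C) : Matrix (Idx n) (Idx n) ℝ :=
  vecMulVec (xv n hn β.1.1 β.1.2) (Xv n l ⟨0, hn l⟩)

/-- `𝔟^β_γ = x^β (X^γ)ᵀ` for cocolors `β, γ`. -/
noncomputable def bM {C : ℕ} (n : Fin C → ℕ) (hn : ∀ c, 0 < n c) (β γ : Cocolor n) :
    Matrix (Idx n) (Idx n) ℝ :=
  vecMulVec (xv n hn β.1.1 β.1.2) (Xv n γ.1.1 γ.1.2)

/-- `𝔬^k_γ = x^k_0 (X^γ)ᵀ` for a color `k` and cocolor `γ`. -/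
noncomputable def oM {C : ℕ} (n : Fin C → ℕ) (hn : ∀ c, 0 < n c) (k : Fin C)
    (γ : Cocolor n) : Matrix (Idx n) (Idx n) ℝ :=
  vecMulVec (xv n hn k ⟨0, hn k⟩) (Xv n γ.1.1 γ.1.2)


section Aux

lemma vmv_mul {I : Type*} [Fintype I] [DecidableEq I] (a b c d : I → ℝ) :
    vecMulVec a b * vecMulVec c d = (b ⬝ᵥ c) • vecMulVec a d := by
  ext i j
  simp only [Matrix.mul_apply, vecMulVec_apply, Matrix.smul_apply, dotProduct, smul_eq_mul,
    Finset.sum_mul]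
  apply Finset.sum_congr rfl
  intro x _
  ring

variable {C : ℕ} {n : Fin C → ℕ}

lemma coc_ne (γ : Cocolor n) (k : Fin C) (h0 : 0 < n k) :
    (⟨k, ⟨0, h0⟩⟩ : Idx n) ≠ γ.1 := by
  intro h
  exact γ.2 ((congrArg (fun p : Idx n => (p.2 : ℕ)) h).symm)

lemma Xv_coc (γ : Cocolor n) : Xv n γ.1.1 γ.1.2 = Pi.single γ.1 1 := by
  simp [Xv, γ.2]

lemma xv_zero (hn : ∀ c, 0 < n c) (k : Fin C) :
    xv n hn k ⟨0, hn k⟩ = Pi.single (⟨k, ⟨0, hn k⟩⟩ : Idx n) 1 := by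
  simp [xv]

lemma oM_eq (hn : ∀ c, 0 < n c) (k : Fin C) (γ : Cocolor n) :
    oM n hn k γ = vecMulVec (Pi.single (⟨k, ⟨0, hn k⟩⟩ : Idx n) 1) (Pi.single γ.1 1) := by
  rw [oM, Xv_coc, xv_zero]

lemma dot_coc_zero (γ : Cocolor n) (k : Fin C) (h0 : 0 < n k) :
    (Pi.single γ.1 1 : Idx n → ℝ) ⬝ᵥ Pi.single (⟨k, ⟨0, h0⟩⟩ : Idx n) 1 = 0 := by
  rw [dotProduct_single, Pi.single_apply, if_neg (coc_ne γ k h0)]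
  simp

lemma oM_mul_oM (hn : ∀ c, 0 < n c) (c₁ c₂ : Fin C) (β₁ β₂ : Cocolor n) :
    oM n hn c₁ β₁ * oM n hn c₂ β₂ = 0 := by
  rw [oM_eq, oM_eq, vmv_mul, dot_coc_zero, zero_smul]

end Aux

/-- `[𝔬,𝔬] = 0` (the `𝔬`-span is abelian), `[𝔟^{β₁}_{β₂}, 𝔬^c_{β₃}] = -δ_{β₁ β₃} 𝔬^c_{β₂}`
and `[𝔠^{c₁}_{c₂}, 𝔬^{c₃}_β] = δ_{c₂ c₃} 𝔬^{c₁}_β`. -/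
theorem stmt14 {C : ℕ} (hC : 0 < C) (n : Fin C → ℕ) (hn : ∀ c, 0 < n c) :
    (∀ (c₁ c₂ : Fin C) (β₁ β₂ : Cocolor n),
      oM n hn c₁ β₁ * oM n hn c₂ β₂ - oM n hn c₂ β₂ * oM n hn c₁ β₁ = 0) ∧
    (∀ x ∈ Submodule.span ℝ {M | ∃ (k : Fin C) (γ : Cocolor n), M = oM n hn k γ},
      ∀ y ∈ Submodule.span ℝ {M | ∃ (k : Fin C) (γ : Cocolor n), M = oM n hn k γ},
        x * y - y * x = 0) ∧
    (∀ (β₁ β₂ β₃ : Cocolor n) (c : Fin C),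
      bM n hn β₁ β₂ * oM n hn c β₃ - oM n hn c β₃ * bM n hn β₁ β₂
        = -((if β₁ = β₃ then (1 : ℝ) else 0) • oM n hn c β₂)) ∧
    (∀ (c₁ c₂ c₃ : Fin C) (β : Cocolor n),
      cM n hn c₁ c₂ * oM n hn c₃ β - oM n hn c₃ β * cM n hn c₁ c₂
        = (if c₂ = c₃ then (1 : ℝ) else 0) • oM n hn c₁ β) := by
  have S := Submodule.span ℝ {M | ∃ (k : Fin C) (γ : Cocolor n), M = oM n hn k γ}
  refine ⟨?_, ?_, ?_, ?_⟩
  · intro c₁ c₂ β₁ β₂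
    rw [oM_mul_oM, oM_mul_oM, sub_zero]
  · intro x hx y hy
    rw [sub_eq_zero]
    induction hx using Submodule.span_induction with
    | mem x hx =>
      induction hy using Submodule.span_induction with
      | mem y hy =>
        obtain ⟨k₁, γ₁, rfl⟩ := hx
        obtain ⟨k₂, γ₂, rfl⟩ := hy
        rw [oM_mul_oM, oM_mul_oM]
      | zero => simp
      | add y z _ _ hy hz => rw [mul_add, add_mul, hy, hz]
      | smul r y _ hy => rw [mul_smul_comm, smul_mul_assoc, hy]
    | zero => simp
    | add x z _ _ h1 h2 => rw [mul_add, add_mul, h1, h2]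
    | smul r x _ h1 => rw [mul_smul_comm, smul_mul_assoc, h1]
  · intro β₁ β₂ β₃ c
    have h1 : bM n hn β₁ β₂ * oM n hn c β₃ = 0 := by
      rw [bM, oM_eq, Xv_coc, vmv_mul, dot_coc_zero, zero_smul]
    have h2 : oM n hn c β₃ * bM n hn β₁ β₂
        = (if β₁ = β₃ then (1 : ℝ) else 0) • oM n hn c β₂ := by
      rw [bM, oM_eq, oM_eq, Xv_coc, vmv_mul]
      congr 1
      rw [single_dotProduct, one_mul, xv]
      rcases eq_or_ne β₁ β₃ with h | h
      · subst h
        rw [if_neg β₁.2, if_pos rfl]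
        simp [Pi.single_apply, Ne.symm (coc_ne β₁ β₁.1.1 (hn β₁.1.1))]
      · rw [if_neg β₁.2, if_neg h]
        have hne : β₁.1 ≠ β₃.1 := fun hh => h (Subtype.ext hh)
        simp [Pi.single_apply, Ne.symm hne, (coc_ne β₃ β₁.1.1 (hn β₁.1.1)).symm]
    rw [h1, h2, zero_sub]
  · intro c₁ c₂ c₃ β
    have h1 : cM n hn c₁ c₂ * oM n hn c₃ β
        = (if c₂ = c₃ then (1 : ℝ) else 0) • oM n hn c₁ β := by
      rw [cM, oM_eq, oM_eq, vmv_mul]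
      congr 1
      rw [dotProduct_single, mul_one, Xv]
      simp only [Fin.val_mk, if_true, Finset.sum_apply]
      rcases eq_or_ne c₂ c₃ with h | h
      · subst h
        rw [if_pos rfl, Finset.sum_eq_single (⟨0, hn c₂⟩ : Fin (n c₂))]
        · simp
        · intro q _ hq
          rw [Pi.single_apply, if_neg]
          intro hh
          exact hq (by injection hh.symm)
        · simp
      · rw [if_neg h]
        apply Finset.sum_eq_zero
        intro q _
        rw [Pi.single_apply, if_neg]
        intro hh
        exact h (congrArg Sigma.fst hh).symm
    have h2 : oM n hn c₃ β * cM n hn c₁ c₂ = 0 := by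
      rw [cM, oM_eq, xv_zero, vmv_mul, dot_coc_zero, zero_smul]
    rw [h1, h2, sub_zero]
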